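/- arXiv:1803.09959 — 4 statements merged into one kernel-verified Lean document; each statement's English description precedes it below -/
import Mathlib

section
/- Let (A, Γ, G, δ) be a G-graded algebra that is graded-simple (A² ≠ 0 and A has no proper nonzero graded ideals). Then the centroid C(A) is itself G-graded: C(A) = ⊕_{g∈G} C(A)_g, where C(A)_g = {c ∈ C(A) : c·A_{g'} ⊆ A_{gg'} for all g' ∈ G}. -/
/-! Generic framework: nonassociative algebras are modules `B` over a field `F`
equipped with an explicit multiplication `mul : B → B → B`. -/

/-- `mul` is `F`-bilinear. -/
def IsBilinearMul (F : Type*) {B : Type*} [Field F] [AddCommGroup B] [Module F B]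
    (mul : B → B → B) : Prop :=
  (∀ x y z : B, mul (x + y) z = mul x z + mul y z) ∧
  (∀ x y z : B, mul x (y + z) = mul x y + mul x z) ∧
  (∀ (c : F) (x y : B), mul (c • x) y = c • mul x y) ∧
  (∀ (c : F) (x y : B), mul x (c • y) = c • mul x y)

/-- The product of the subspaces `U` and `V` is contained in `W`. -/
def SubMulLE {F B : Type*} [Field F] [AddCommGroup B] [Module F B]
    (mul : B → B → B) (U V W : Submodule F B) : Prop :=
  ∀ u ∈ U, ∀ v ∈ V, mul u v ∈ W

/-- The product of the subspaces `U` and `V` is nonzero. -/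
def SubMulNonzero {F B : Type*} [Field F] [AddCommGroup B] [Module F B]
    (mul : B → B → B) (U V : Submodule F B) : Prop :=
  ∃ u ∈ U, ∃ v ∈ V, mul u v ≠ 0

/-- A grading of the subalgebra `S` of `(B, mul)`: a set `Γ` of nonzero subspaces of `S`
whose (direct) sum is `S`, closed under multiplication. -/
structure IsGradingOn {F B : Type*} [Field F] [AddCommGroup B] [Module F B]
    (mul : B → B → B) (S : Submodule F B) (Γ : Set (Submodule F B)) : Prop where
  ne_bot : ∀ U ∈ Γ, U ≠ ⊥
  le : ∀ U ∈ Γ, U ≤ S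
  indep : sSupIndep Γ
  total : sSup Γ = S
  mul_closed : ∀ U ∈ Γ, ∀ V ∈ Γ, ∃ W ∈ Γ, SubMulLE mul U V W

/-- A grading on the whole algebra `(B, mul)`. -/
def IsGrading {F B : Type*} [Field F] [AddCommGroup B] [Module F B]
    (mul : B → B → B) (Γ : Set (Submodule F B)) : Prop :=
  IsGradingOn mul ⊤ Γ

/-- A degree map `δ : Γ → G` compatible with the grading relations:
`δ U + δ V = δ W` whenever `0 ≠ U·V ⊆ W`. -/
def IsCompatMap {F B : Type*} [Field F] [AddCommGroup B] [Module F B]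
    (mul : B → B → B) (Γ : Set (Submodule F B))
    (G : Type*) [AddCommGroup G] (δ : Submodule F B → G) : Prop :=
  ∀ U ∈ Γ, ∀ V ∈ Γ, ∀ W ∈ Γ,
    SubMulNonzero mul U V → SubMulLE mul U V W → δ U + δ V = δ W

/-- `(G, δ)` is the universal group of the grading `Γ`: `δ` is compatible and every compatible
degree map factors through `δ` via a unique group homomorphism. -/
structure IsUniversalGroup {F B : Type*} [Field F] [AddCommGroup B] [Module F B]
    (mul : B → B → B) (Γ : Set (Submodule F B))
    (G : Type) [AddCommGroup G] (δ : Submodule F B → G) : Prop where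
  compat : IsCompatMap mul Γ G δ
  universal : ∀ (H : Type) (instH : AddCommGroup H) (δ' : Submodule F B → H),
    IsCompatMap mul Γ H δ' → ∃! φ : G →+ H, ∀ U ∈ Γ, φ (δ U) = δ' U

/-- `Γ` is a group-grading: it can be realized by an injective compatible degree map into an
abelian group. -/
def IsGroupGrading {F B : Type*} [Field F] [AddCommGroup B] [Module F B]
    (mul : B → B → B) (Γ : Set (Submodule F B)) : Prop :=
  ∃ (G : Type) (instG : AddCommGroup G) (δ : Submodule F B → G),
    Set.InjOn δ Γ ∧ @IsCompatMap F B _ _ _ mul Γ G instG δ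

/-- `Γ''` refines `Γ`: every component of `Γ''` is contained in a component of `Γ`. -/
def GradRefines {F B : Type*} [Field F] [AddCommGroup B] [Module F B]
    (Γ'' Γ : Set (Submodule F B)) : Prop :=
  ∀ U ∈ Γ'', ∃ W ∈ Γ, U ≤ W

/-- `Γ` is a fine grading of `S`: it admits no proper refinement. -/
def IsFineGradingOn {F B : Type*} [Field F] [AddCommGroup B] [Module F B]
    (mul : B → B → B) (S : Submodule F B) (Γ : Set (Submodule F B)) : Prop :=
  IsGradingOn mul S Γ ∧
    ∀ Γ'' : Set (Submodule F B), IsGradingOn mul S Γ'' → GradRefines Γ'' Γ → Γ'' = Γ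

/-- `Γ` is a fine group-grading of `S`: it admits no proper refinement among group-gradings. -/
def IsFineGroupGradingOn {F B : Type*} [Field F] [AddCommGroup B] [Module F B]
    (mul : B → B → B) (S : Submodule F B) (Γ : Set (Submodule F B)) : Prop :=
  IsGradingOn mul S Γ ∧ IsGroupGrading mul Γ ∧
    ∀ Γ'' : Set (Submodule F B), IsGradingOn mul S Γ'' → IsGroupGrading mul Γ'' →
      GradRefines Γ'' Γ → Γ'' = Γ

/-- `I` is a (two-sided) ideal of the subalgebra `S` of `(B, mul)`. -/
def IsIdealIn {F B : Type*} [Field F] [AddCommGroup B] [Module F B]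
    (mul : B → B → B) (S I : Submodule F B) : Prop :=
  I ≤ S ∧ ∀ x ∈ I, ∀ a ∈ S, mul a x ∈ I ∧ mul x a ∈ I

/-- The subalgebra `J` of `(B, mul)` is a simple algebra: its product is nonzero and it has no
proper nonzero ideals. -/
def IsSimpleAlgOn {F B : Type*} [Field F] [AddCommGroup B] [Module F B]
    (mul : B → B → B) (J : Submodule F B) : Prop :=
  (∃ x ∈ J, ∃ y ∈ J, mul x y ≠ 0) ∧
    ∀ I : Submodule F B, IsIdealIn mul J I → I = ⊥ ∨ I = J

/-- The subalgebra `S` of `(B, mul)` is semisimple: a finite direct sum of simple ideals. -/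
def IsSemisimpleOn {F B : Type*} [Field F] [AddCommGroup B] [Module F B]
    (mul : B → B → B) (S : Submodule F B) : Prop :=
  ∃ (n : ℕ) (J : Fin n → Submodule F B), iSupIndep J ∧ (⨆ i, J i) = S ∧
    ∀ i, IsIdealIn mul S (J i) ∧ IsSimpleAlgOn mul (J i)

/-- `I` is a graded submodule with respect to the grading family `𝒜`. -/
def IsGradedSubmoduleFam {F B G : Type*} [Field F] [AddCommGroup B] [Module F B]
    (𝒜 : G → Submodule F B) (I : Submodule F B) : Prop :=
  I = ⨆ g, I ⊓ 𝒜 g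

/-- `I` is a graded submodule with respect to the set-grading `Γ`. -/
def IsGradedSubmoduleSet {F B : Type*} [Field F] [AddCommGroup B] [Module F B]
    (Γ : Set (Submodule F B)) (I : Submodule F B) : Prop :=
  I = ⨆ U ∈ Γ, I ⊓ U

/-- The algebra `(B, mul)` with the `G`-grading `𝒜` is graded-simple: `B·B ≠ 0` and there are
no proper nonzero graded ideals. -/
def IsGradedSimpleFam {F B G : Type*} [Field F] [AddCommGroup B] [Module F B]
    (mul : B → B → B) (𝒜 : G → Submodule F B) : Prop :=
  (∃ a b : B, mul a b ≠ 0) ∧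
    ∀ I : Submodule F B, IsIdealIn mul ⊤ I → IsGradedSubmoduleFam 𝒜 I → I = ⊥ ∨ I = ⊤

/-- The centroid of `(B, mul)`, as a set of `F`-linear endomorphisms. -/
def centroidSet {F B : Type*} [Field F] [AddCommGroup B] [Module F B]
    (mul : B → B → B) : Set (Module.End F B) :=
  {c | ∀ a b : B, c (mul a b) = mul (c a) b ∧ c (mul a b) = mul a (c b)}

/-- The centroid of `(B, mul)`, as a submodule of `End_F(B)` (needs bilinearity of `mul`). -/
def centroid {F B : Type*} [Field F] [AddCommGroup B] [Module F B]
    (mul : B → B → B) (hbil : IsBilinearMul F mul) : Submodule F (Module.End F B) where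
  carrier := centroidSet mul
  add_mem' := by
    rintro c d hc hd
    intro a b
    obtain ⟨hc1, hc2⟩ := hc a b
    obtain ⟨hd1, hd2⟩ := hd a b
    constructor
    · rw [LinearMap.add_apply, hc1, hd1, LinearMap.add_apply, hbil.1]
    · rw [LinearMap.add_apply, hc2, hd2, LinearMap.add_apply, hbil.2.1]
  zero_mem' := by
    intro a b
    have h0 : ∀ y : B, mul 0 y = 0 := fun y => by
      have := hbil.2.2.1 0 0 y; simpa using this
    have h0' : ∀ y : B, mul y 0 = 0 := fun y => by
      have := hbil.2.2.2 0 y 0; simpa using this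
    simp [h0, h0']
  smul_mem' := by
    rintro r c hc a b
    obtain ⟨hc1, hc2⟩ := hc a b
    constructor
    · rw [LinearMap.smul_apply, hc1, LinearMap.smul_apply, hbil.2.2.1]
    · rw [LinearMap.smul_apply, hc2, LinearMap.smul_apply, hbil.2.2.2]

/-- Endomorphisms shifting degrees by `g` with respect to the grading family `𝒜`. -/
def endDegree {F B G : Type*} [Field F] [AddCommGroup B] [Module F B] [AddCommGroup G]
    (𝒜 : G → Submodule F B) (g : G) : Submodule F (Module.End F B) where
  carrier := {c | ∀ g' : G, ∀ x ∈ 𝒜 g', c x ∈ 𝒜 (g + g')}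
  add_mem' := fun hc hd g' x hx => by
    simpa [LinearMap.add_apply] using add_mem (hc g' x hx) (hd g' x hx)
  zero_mem' := fun g' x hx => by simpa using zero_mem _
  smul_mem' := fun r c hc g' x hx => by
    simpa [LinearMap.smul_apply] using Submodule.smul_mem _ r (hc g' x hx)

/-- The homogeneous component of degree `g` of the centroid. -/
def centroidComponent {F B G : Type*} [Field F] [AddCommGroup B] [Module F B] [AddCommGroup G]
    (mul : B → B → B) (hbil : IsBilinearMul F mul)
    (𝒜 : G → Submodule F B) (g : G) : Submodule F (Module.End F B) :=
  centroid mul hbil ⊓ endDegree 𝒜 g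

/-! Loop algebras. We realize the loop algebra inside `G →₀ A` (the `A`-span of the group
algebra `F G`, with `x ⊗ g` corresponding to `Finsupp.single g x`), with the convolution
product. -/

/-- Convolution product on `G →₀ A` induced by `mul`; under `x ⊗ g ↦ single g x` this is the
multiplication of `A ⊗ F[G]`. -/
noncomputable def convMul {A : Type*} {G : Type*} [AddCommGroup A]
    [AddCommGroup G] (mul : A → A → A) (f g : G →₀ A) : G →₀ A :=
  f.sum fun a x => g.sum fun b y => Finsupp.single (a + b) (mul x y)

/-- The loop algebra `L_π(A) = ⊕_g A_{π(g)} ⊗ g` as a submodule of `G →₀ A`. -/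
def loopSubmodule {F A : Type*} {G Gb : Type*} [Field F] [AddCommGroup A] [Module F A]
    [AddCommGroup G] [AddCommGroup Gb] (π : G →+ Gb) (𝒜 : Gb → Submodule F A) :
    Submodule F (G →₀ A) where
  carrier := {f | ∀ g : G, f g ∈ 𝒜 (π g)}
  add_mem' := fun hf hg g => by simpa [Finsupp.add_apply] using add_mem (hf g) (hg g)
  zero_mem' := fun g => by simp
  smul_mem' := fun r f hf g => by
    simpa [Finsupp.smul_apply] using Submodule.smul_mem _ r (hf g)

/-- The multiplication of the loop algebra. -/
noncomputable def loopMul {F A : Type*} {G Gb : Type*} [Field F] [AddCommGroup A] [Module F A]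
    [AddCommGroup G] [AddCommGroup Gb] (mul : A → A → A) (π : G →+ Gb)
    (𝒜 : Gb → Submodule F A)
    (hgmul : ∀ g h : Gb, ∀ x ∈ 𝒜 g, ∀ y ∈ 𝒜 h, mul x y ∈ 𝒜 (g + h))
    (f g : ↥(loopSubmodule π 𝒜)) : ↥(loopSubmodule π 𝒜) :=
  ⟨convMul mul f.1 g.1, by
    intro k
    classical
    simp only [convMul, Finsupp.sum_apply]
    refine Submodule.finsuppSum_mem _ _ _ _ fun a _ => ?_
    refine Submodule.finsuppSum_mem _ _ _ _ fun b _ => ?_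
    simp only [Finsupp.single_apply]
    split_ifs with h
    · have hk : π k = π a + π b := by rw [← h, map_add]
      rw [hk]
      exact hgmul _ _ _ (f.2 a) _ (g.2 b)
    · exact zero_mem _⟩

/-- The homogeneous component of degree `g` of the loop algebra. -/
noncomputable def loopComponent {F A : Type*} {G Gb : Type*} [Field F] [AddCommGroup A] [Module F A]
    [AddCommGroup G] [AddCommGroup Gb] (π : G →+ Gb) (𝒜 : Gb → Submodule F A) (g : G) :
    Submodule F ↥(loopSubmodule π 𝒜) :=
  Submodule.comap (loopSubmodule π 𝒜).subtype ((𝒜 (π g)).map (Finsupp.lsingle g))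

/-- The set of homogeneous components of the `G`-grading of the loop algebra, as submodules of
the ambient `G →₀ A`. -/
def loopGradingSet {F A : Type*} {G Gb : Type*} [Field F] [AddCommGroup A] [Module F A]
    [AddCommGroup G] [AddCommGroup Gb] (π : G →+ Gb) (𝒜 : Gb → Submodule F A) :
    Set (Submodule F (G →₀ A)) :=
  {S | ∃ g : G, 𝒜 (π g) ≠ ⊥ ∧ S = (𝒜 (π g)).map (Finsupp.lsingle g)}

/-- The set of homogeneous components of the grading family `𝒜`. -/
def famGradingSet {F A Gb : Type*} [Field F] [AddCommGroup A] [Module F A]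
    (𝒜 : Gb → Submodule F A) : Set (Submodule F A) :=
  {S | ∃ gb : Gb, 𝒜 gb ≠ ⊥ ∧ S = 𝒜 gb}

/-! Every endomorphism `c` of the graded space splits into homogeneous components `c_g`, where
`c_g x = (c x)_{g+h}` for `x ∈ A_h`, and homogeneous components of a centroid element are again
in the centroid. The kernel of a homogeneous centroid element is a graded ideal, so by
graded-simplicity each `c_g` is either zero or injective. Evaluating at a single nonzero
homogeneous `x ∈ A_h` then shows that `c_g = 0` unless `(c x)_{g+h} ≠ 0`, which leaves finitely
many `g`, and `c = ∑ c_g`. Independence of the components already holds for degree-shifting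
endomorphisms of any graded space. -/

open DirectSum

section GradedEndomorphisms

variable {F B G : Type*} [Field F] [AddCommGroup B] [Module F B] [DecidableEq G]
  (𝒜 : G → Submodule F B) [Decomposition 𝒜]

theorem isGradedSubmoduleFam_of_isHomogeneous {p : Submodule F B}
    (hp : SetLike.IsHomogeneous 𝒜 p) : IsGradedSubmoduleFam 𝒜 p := by
  classical
  refine le_antisymm (fun x hx => ?_) (iSup_le fun _ => inf_le_left)
  rw [← sum_support_decompose 𝒜 x]
  exact Submodule.sum_mem _ fun i _ =>
    Submodule.mem_iSup_of_mem i ⟨hp i hx, (decompose 𝒜 x i).2⟩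

variable [AddCommGroup G]

def endComponent (g : G) : Module.End F B →ₗ[F] Module.End F B where
  toFun c := toModule F G B (fun h => (𝒜 (g + h)).subtype ∘ₗ
      component F G (fun i => 𝒜 i) (g + h) ∘ₗ (decomposeLinearEquiv 𝒜).toLinearMap ∘ₗ
      c ∘ₗ (𝒜 h).subtype) ∘ₗ (decomposeLinearEquiv 𝒜).toLinearMap
  map_add' c d := decompose_lhom_ext 𝒜 fun h => by ext x; simp
  map_smul' r c := decompose_lhom_ext 𝒜 fun h => by ext x; simp

variable {𝒜}

theorem endComponent_apply_of_mem (g : G) (c : Module.End F B) {h : G} {x : B} (hx : x ∈ 𝒜 h) :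
    endComponent 𝒜 g c x = decompose 𝒜 (c x) (g + h) := by
  lift x to 𝒜 h using hx
  simp only [endComponent, LinearMap.coe_mk, AddHom.coe_mk, LinearMap.comp_apply,
    LinearEquiv.coe_coe, decomposeLinearEquiv_apply_coe, toModule_lof]
  rfl

theorem endComponent_mem_endDegree (g : G) (c : Module.End F B) :
    endComponent 𝒜 g c ∈ endDegree 𝒜 g := fun _ x hx => by
  rw [endComponent_apply_of_mem g c hx]
  exact (decompose 𝒜 (c x) _).2

theorem decompose_apply_of_mem_endDegree {g : G} {d : Module.End F B}
    (hd : d ∈ endDegree 𝒜 g) (x : B) (k : G) :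
    (decompose 𝒜 (d x) (g + k) : B) = d (decompose 𝒜 x k) := by
  induction x using Decomposition.inductionOn 𝒜 with
  | zero => simp
  | @homogeneous i x =>
    obtain ⟨x, hx⟩ := x
    by_cases hik : i = k
    · subst hik
      rw [decompose_of_mem_same 𝒜 (hd _ x hx), decompose_of_mem_same 𝒜 hx]
    · rw [decompose_of_mem_ne 𝒜 (hd _ x hx) (by simpa using hik),
        decompose_of_mem_ne 𝒜 hx hik, map_zero]
  | add x y hx hy => simp [decompose_add, hx, hy]

theorem endComponent_of_mem_endDegree_self {g : G} {d : Module.End F B}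
    (hd : d ∈ endDegree 𝒜 g) : endComponent 𝒜 g d = d :=
  decompose_lhom_ext 𝒜 fun h => by
    ext ⟨x, hx⟩
    simp [endComponent_apply_of_mem g d hx, decompose_of_mem_same 𝒜 (hd h x hx)]

theorem endComponent_of_mem_endDegree_of_ne {g j : G} {d : Module.End F B}
    (hd : d ∈ endDegree 𝒜 j) (hjg : j ≠ g) : endComponent 𝒜 g d = 0 :=
  decompose_lhom_ext 𝒜 fun h => by
    ext ⟨x, hx⟩
    have hne : j + h ≠ g + h := fun h' => hjg (add_right_cancel h')
    simp [endComponent_apply_of_mem g d hx, decompose_of_mem_ne 𝒜 (hd h x hx) hne]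

variable (𝒜) in
theorem iSupIndep_endDegree : iSupIndep (endDegree 𝒜) := by
  intro g
  rw [Submodule.disjoint_def]
  intro d hdg hd
  have hker : (⨆ j, ⨆ (_ : j ≠ g), endDegree 𝒜 j) ≤ LinearMap.ker (endComponent 𝒜 g) :=
    iSup₂_le fun j hj e he => endComponent_of_mem_endDegree_of_ne he hj
  rw [← endComponent_of_mem_endDegree_self hdg]
  exact hker hd

theorem isHomogeneous_ker_of_mem_endDegree {g : G} {d : Module.End F B}
    (hd : d ∈ endDegree 𝒜 g) : SetLike.IsHomogeneous 𝒜 (LinearMap.ker d) := fun k x hx => by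
  rw [LinearMap.mem_ker, ← decompose_apply_of_mem_endDegree hd, LinearMap.mem_ker.mp hx]
  simp

theorem eq_sum_endComponent {c : Module.End F B} {T : Finset G}
    (hT : ∀ g ∉ T, endComponent 𝒜 g c = 0) : c = ∑ g ∈ T, endComponent 𝒜 g c := by
  classical
  refine decompose_lhom_ext 𝒜 fun h => ?_
  ext ⟨x, hx⟩
  have hsupp : (decompose 𝒜 (c x)).support ⊆ T.image (· + h) := fun k hk => by
    refine Finset.mem_image.mpr ⟨k - h, by_contra fun hkT => ?_, sub_add_cancel k h⟩
    have hck := endComponent_apply_of_mem (k - h) c hx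
    rw [hT _ hkT, sub_add_cancel] at hck
    exact DFinsupp.mem_support_iff.mp hk (Subtype.ext hck.symm)
  calc c x = ∑ k ∈ (decompose 𝒜 (c x)).support, (decompose 𝒜 (c x) k : B) :=
        (sum_support_decompose 𝒜 (c x)).symm
    _ = ∑ k ∈ T.image (· + h), (decompose 𝒜 (c x) k : B) :=
        Finset.sum_subset hsupp fun k _ hk => by simp [DFinsupp.notMem_support_iff.mp hk]
    _ = ∑ g ∈ T, endComponent 𝒜 g c x := by
        rw [Finset.sum_image fun _ _ _ _ => add_right_cancel]
        exact Finset.sum_congr rfl fun g _ => (endComponent_apply_of_mem g c hx).symm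
    _ = _ := by simp

end GradedEndomorphisms

namespace IsBilinearMul

variable {F B G : Type*} [Field F] [AddCommGroup B] [Module F B] {mul : B → B → B}
  (hbil : IsBilinearMul F mul)
include hbil

def toLinearMap₂ : B →ₗ[F] B →ₗ[F] B :=
  LinearMap.mk₂ F mul hbil.1 hbil.2.2.1 hbil.2.1 hbil.2.2.2

@[simp]
theorem toLinearMap₂_apply (a b : B) : hbil.toLinearMap₂ a b = mul a b := rfl

theorem zero_mul (b : B) : mul 0 b = 0 := hbil.toLinearMap₂.map_zero₂ b

theorem mul_zero (a : B) : mul a 0 = 0 := (hbil.toLinearMap₂ a).map_zero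

variable [AddCommGroup G] {𝒜 : G → Submodule F B}
  (hgmul : ∀ g h : G, ∀ x ∈ 𝒜 g, ∀ y ∈ 𝒜 h, mul x y ∈ 𝒜 (g + h))
include hgmul

theorem toLinearMap₂_mem_endDegree {i : G} {a : B} (ha : a ∈ 𝒜 i) :
    hbil.toLinearMap₂ a ∈ endDegree 𝒜 i :=
  fun _ _ hx => hgmul _ _ _ ha _ hx

theorem flip_toLinearMap₂_mem_endDegree {j : G} {b : B} (hb : b ∈ 𝒜 j) :
    hbil.toLinearMap₂.flip b ∈ endDegree 𝒜 j :=
  fun k _ hx => add_comm k j ▸ hgmul _ _ _ hx _ hb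

end IsBilinearMul

section Centroid

variable {F B G : Type*} [Field F] [AddCommGroup B] [Module F B] {mul : B → B → B}
  (hbil : IsBilinearMul F mul)

theorem isIdealIn_ker_of_mem_centroid {d : Module.End F B} (hd : d ∈ centroid mul hbil) :
    IsIdealIn mul ⊤ (LinearMap.ker d) :=
  ⟨le_top, fun x hx a _ => by
    simp only [LinearMap.mem_ker] at hx ⊢
    exact ⟨by rw [(hd a x).2, hx, hbil.mul_zero], by rw [(hd x a).1, hx, hbil.zero_mul]⟩⟩

variable [DecidableEq G] {𝒜 : G → Submodule F B} [Decomposition 𝒜]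

theorem mem_centroid_of_homogeneous {d : Module.End F B}
    (h : ∀ i j, ∀ a ∈ 𝒜 i, ∀ b ∈ 𝒜 j, d (mul a b) = mul (d a) b ∧ d (mul a b) = mul a (d b)) :
    d ∈ centroid mul hbil := by
  intro a b
  induction a using Decomposition.inductionOn 𝒜 with
  | zero => simp [hbil.zero_mul]
  | homogeneous a =>
    induction b using Decomposition.inductionOn 𝒜 with
    | zero => simp [hbil.mul_zero]
    | homogeneous b => exact h _ _ _ a.2 _ b.2
    | add b b' hb hb' =>
      exact ⟨by simp only [hbil.2.1, map_add, hb.1, hb'.1],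
        by simp only [hbil.2.1, map_add, hb.2, hb'.2]⟩
  | add a a' ha ha' =>
    exact ⟨by simp only [hbil.1, map_add, ha.1, ha'.1],
      by simp only [hbil.1, map_add, ha.2, ha'.2]⟩

theorem endComponent_mem_centroid [AddCommGroup G]
    (hgmul : ∀ g h : G, ∀ x ∈ 𝒜 g, ∀ y ∈ 𝒜 h, mul x y ∈ 𝒜 (g + h)) {c : Module.End F B}
    (hc : c ∈ centroid mul hbil) (g : G) : endComponent 𝒜 g c ∈ centroid mul hbil := by
  refine mem_centroid_of_homogeneous hbil (𝒜 := 𝒜) fun i j a ha b hb => ?_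
  have hR := decompose_apply_of_mem_endDegree
    (hbil.flip_toLinearMap₂_mem_endDegree hgmul hb) (c a) (g + i)
  have hL := decompose_apply_of_mem_endDegree
    (hbil.toLinearMap₂_mem_endDegree hgmul ha) (c b) (g + j)
  simp only [LinearMap.flip_apply, IsBilinearMul.toLinearMap₂_apply] at hR hL
  rw [endComponent_apply_of_mem g c (hgmul _ _ _ ha _ hb), endComponent_apply_of_mem g c ha,
    endComponent_apply_of_mem g c hb]
  constructor
  · rw [(hc a b).1, ← hR, add_comm j, add_assoc]
  · rw [(hc a b).2, ← hL, add_left_comm]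

end Centroid

namespace IsGradedSimpleFam

variable {F B G : Type*} [Field F] [AddCommGroup B] [Module F B] {mul : B → B → B}
  (hbil : IsBilinearMul F mul) [DecidableEq G] {𝒜 : G → Submodule F B} [Decomposition 𝒜]
  (hgs : IsGradedSimpleFam mul 𝒜)
include hbil hgs

theorem exists_homogeneous_ne_zero : ∃ h, ∃ x ∈ 𝒜 h, x ≠ 0 := by
  obtain ⟨a, b, hab⟩ := hgs.1
  have ha : a ≠ 0 := by rintro rfl; exact hab (hbil.zero_mul b)
  by_contra! hzero
  classical
  exact ha (by rw [← sum_support_decompose 𝒜 a]; simp [hzero _ _ (decompose 𝒜 a _).2])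

variable [AddCommGroup G]

theorem eq_zero_of_apply_eq_zero {g : G} {d : Module.End F B}
    (hd : d ∈ centroidComponent mul hbil 𝒜 g) {x : B} (hx : x ≠ 0) (hdx : d x = 0) :
    d = 0 := by
  rcases hgs.2 _ (isIdealIn_ker_of_mem_centroid hbil hd.1)
    (isGradedSubmoduleFam_of_isHomogeneous 𝒜 (isHomogeneous_ker_of_mem_endDegree hd.2))
    with hker | hker
  · have hxker : x ∈ LinearMap.ker d := hdx
    rw [hker] at hxker
    exact absurd ((Submodule.mem_bot F).mp hxker) hx
  · exact LinearMap.ker_eq_top.mp hker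

theorem centroid_le_iSup_centroidComponent
    (hgmul : ∀ g h : G, ∀ x ∈ 𝒜 g, ∀ y ∈ 𝒜 h, mul x y ∈ 𝒜 (g + h)) :
    centroid mul hbil ≤ ⨆ g, centroidComponent mul hbil 𝒜 g := by
  intro c hc
  have hcomp g : endComponent 𝒜 g c ∈ centroidComponent mul hbil 𝒜 g :=
    ⟨endComponent_mem_centroid hbil hgmul hc g, endComponent_mem_endDegree g c⟩
  obtain ⟨h, x, hxh, hx⟩ := hgs.exists_homogeneous_ne_zero hbil
  classical
  have hT : ∀ g ∉ (decompose 𝒜 (c x)).support.image (· - h), endComponent 𝒜 g c = 0 :=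
    fun g hg => hgs.eq_zero_of_apply_eq_zero hbil (hcomp g) hx <| by
      rw [endComponent_apply_of_mem g c hxh]
      by_contra hne
      refine hg (Finset.mem_image.mpr ⟨g + h, ?_, add_sub_cancel_right g h⟩)
      exact DFinsupp.mem_support_iff.mpr fun h0 => hne (by simp [h0])
  rw [eq_sum_endComponent hT]
  exact Submodule.sum_mem _ fun g _ => Submodule.mem_iSup_of_mem g (hcomp g)

end IsGradedSimpleFam

/-- if a `G`-graded algebra is graded-simple, then its centroid is `G`-graded:
`C(A) = ⊕_g C(A)_g`. -/
theorem stmt_9 {F B : Type*} [Field F] [AddCommGroup B] [Module F B]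
    {G : Type*} [AddCommGroup G] [DecidableEq G]
    (mul : B → B → B) (hbil : IsBilinearMul F mul)
    (𝒜 : G → Submodule F B) (hint : DirectSum.IsInternal 𝒜)
    (hgmul : ∀ g h : G, ∀ x ∈ 𝒜 g, ∀ y ∈ 𝒜 h, mul x y ∈ 𝒜 (g + h))
    (hgs : IsGradedSimpleFam mul 𝒜) :
    iSupIndep (fun g => centroidComponent mul hbil 𝒜 g) ∧
    (⨆ g, centroidComponent mul hbil 𝒜 g) = centroid mul hbil := by
  let := hint.chooseDecomposition
  exact ⟨(iSupIndep_endDegree 𝒜).mono fun _ => inf_le_right,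
    le_antisymm (iSup_le fun _ => inf_le_left)
      (hgs.centroid_le_iSup_centroidComponent hbil hgmul)⟩
end

section
/- Let F be algebraically closed, π: G → Ḡ a surjective homomorphism of abelian groups with finite kernel H = {h₁,…,hₙ} of order n not divisible by char F, and A a central simple Ḡ-graded algebra. Choose characters χ₁,…,χₙ: G → F^× whose restrictions to H are the n distinct characters of H. Then the linear map Φ: L_π(A) → A × ⋯ × A (n copies) defined by x_{π(g)} ⊗ g ↦ (χ₁(g)x_{π(g)}, …, χₙ(g)x_{π(g)}) is an algebra isomorphism. -/
/-! Each `χᵢ` is a character, so `x ⊗ g ↦ χᵢ(g) x` is multiplicative on `A ⊗ FG`. The map `Φ`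
preserves the `Ḡ`-degree, and on the part of degree `π g` of the loop algebra, which is
`A_{π g} ⊗ (g + ker π)`, it acts through the matrix `(χᵢ(g + hⱼ))ᵢⱼ`. That matrix is invertible
by Dedekind's independence of the `n` distinct characters of `ker π`, so `Φ` is bijective in
each degree. -/

namespace Matrix

variable {R A ι : Type*} [CommRing R] [AddCommMonoid A] [Module R A] [Fintype ι]

theorem sum_smul_sum_smul (M N : Matrix ι ι R) (v : ι → A) (i : ι) :
    ∑ j, M i j • ∑ k, N j k • v k = ∑ k, (M * N) i k • v k := by
  simp only [Finset.smul_sum, smul_smul, mul_apply, Finset.sum_smul]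
  exact Finset.sum_comm

theorem sum_one_smul [DecidableEq ι] (v : ι → A) (i : ι) :
    ∑ j, (1 : Matrix ι ι R) i j • v j = v i := by
  simp [one_apply, ite_smul]

theorem eq_zero_of_sum_smul_eq_zero [DecidableEq ι] {M : Matrix ι ι R} (hM : IsUnit M)
    {v : ι → A} (hv : ∀ i, ∑ j, M i j • v j = 0) : v = 0 := by
  funext k
  rw [← sum_one_smul (R := R) v k, ← nonsing_inv_mul M ((isUnit_iff_isUnit_det M).mp hM),
    ← sum_smul_sum_smul]
  simp [hv]

theorem exists_sum_smul_eq [DecidableEq ι] {M : Matrix ι ι R} (hM : IsUnit M)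
    (p : Submodule R A) {w : ι → A} (hw : ∀ i, w i ∈ p) :
    ∃ v : ι → A, (∀ j, v j ∈ p) ∧ ∀ i, ∑ j, M i j • v j = w i := by
  refine ⟨fun j => ∑ i, M⁻¹ j i • w i, fun j => p.sum_mem fun i _ => p.smul_mem _ (hw i), ?_⟩
  intro i
  rw [sum_smul_sum_smul, mul_nonsing_inv M ((isUnit_iff_isUnit_det M).mp hM),
    sum_one_smul]

end Matrix

section Characters

variable {F G ι : Type*} [AddCommGroup G]

def cosetMatrix [Monoid F] (χ : ι → Multiplicative G →* Fˣ) {K : AddSubgroup G} (e : ι ≃ K)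
    (g : G) : Matrix ι ι F :=
  Matrix.of fun i j => (χ i (.ofAdd (g + e j)) : F)

theorem cosetMatrix_apply [Monoid F] (χ : ι → Multiplicative G →* Fˣ) {K : AddSubgroup G}
    (e : ι ≃ K) (g : G) (i j : ι) : cosetMatrix χ e g i j = (χ i (.ofAdd (g + e j)) : F) :=
  rfl

/-- The rows are the restrictions of the `χᵢ` to `K` (pairwise distinct characters, hence
linearly independent by Dedekind's lemma), scaled by the units `χᵢ(g)`. -/
theorem isUnit_cosetMatrix [Field F] [Fintype ι] [DecidableEq ι] {χ : ι → Multiplicative G →* Fˣ}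
    {K : AddSubgroup G} (e : ι ≃ K)
    (hχ : ∀ i j, i ≠ j → ∃ k : K, χ i (.ofAdd (k : G)) ≠ χ j (.ofAdd (k : G))) (g : G) :
    IsUnit (cosetMatrix χ e g) := by
  rw [← Matrix.linearIndependent_rows_iff_isUnit]
  let ψ : ι → Multiplicative K →* F := fun i =>
    (Units.coeHom F).comp ((χ i).comp K.subtype.toMultiplicative)
  have hψ : Function.Injective ψ := by
    intro i j hij
    by_contra hne
    obtain ⟨k, hk⟩ := hχ i j hne
    exact hk (Units.ext (by simpa [ψ] using DFunLike.congr_fun hij (.ofAdd k)))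
  let b : ι → Multiplicative K := fun j => .ofAdd (e j)
  have hb : Function.Surjective b := Multiplicative.ofAdd.surjective.comp e.surjective
  have hrows : (cosetMatrix χ e g).row =
      (fun i => χ i (.ofAdd g)) • fun i => LinearMap.funLeft F F b (ψ i) := by
    funext i j
    simp [cosetMatrix_apply, ψ, b, ofAdd_add, Units.smul_def]
  rw [hrows]
  exact (((linearIndependent_monoidHom _ F).comp ψ hψ).map' _
    (LinearMap.ker_eq_bot.mpr (LinearMap.funLeft_injective_of_surjective F F b hb))).units_smul _

end Characters

section CharEval

variable {F A G : Type*} [Field F] [AddCommGroup A] [Module F A] [AddCommGroup G]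

def IsBilinearMul.toLin₂ {mul : A → A → A} (hbil : IsBilinearMul F mul) :
    A →ₗ[F] A →ₗ[F] A :=
  LinearMap.mk₂ F mul hbil.1 hbil.2.2.1 hbil.2.1 hbil.2.2.2

theorem IsBilinearMul.toLin₂_apply {mul : A → A → A} (hbil : IsBilinearMul F mul) (x y : A) :
    hbil.toLin₂ x y = mul x y :=
  rfl

noncomputable def charEval (χ : Multiplicative G →* Fˣ) : (G →₀ A) →ₗ[F] A :=
  Finsupp.lsum F fun g => (χ (.ofAdd g) : F) • LinearMap.id

theorem charEval_apply (χ : Multiplicative G →* Fˣ) (f : G →₀ A) :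
    charEval χ f = f.sum fun g x => (χ (.ofAdd g) : F) • x :=
  rfl

theorem charEval_single (χ : Multiplicative G →* Fˣ) (g : G) (x : A) :
    charEval χ (Finsupp.single g x) = (χ (.ofAdd g) : F) • x := by
  simp [charEval]

theorem charEval_convMul {mul : A → A → A} (hbil : IsBilinearMul F mul)
    (χ : Multiplicative G →* Fˣ) (u v : G →₀ A) :
    charEval χ (convMul mul u v) = mul (charEval χ u) (charEval χ v) := by
  calc charEval χ (convMul mul u v)
      = u.sum fun a x => v.sum fun b y => (χ (.ofAdd (a + b)) : F) • mul x y := by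
        simp only [convMul, map_finsuppSum, charEval_single]
    _ = u.sum fun a x => v.sum fun b y =>
          mul ((χ (.ofAdd a) : F) • x) ((χ (.ofAdd b) : F) • y) := by
        simp only [hbil.2.2.1, hbil.2.2.2, smul_smul, ofAdd_add, map_mul, Units.val_mul]
    _ = mul (charEval χ u) (charEval χ v) := by
        simp only [charEval_apply, ← hbil.toLin₂_apply, map_finsuppSum,
          LinearMap.finsupp_sum_apply]
        exact Finsupp.sum_comm _ _ _

end CharEval

section LoopAlgebra

variable {F A G Gb ι : Type*} [Field F] [AddCommGroup A] [Module F A] [AddCommGroup G]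
  [AddCommGroup Gb] {π : G →+ Gb} {𝒜 : Gb → Submodule F A}

theorem single_mem_loopSubmodule {g : G} {x : A} (hx : x ∈ 𝒜 (π g)) :
    Finsupp.single g x ∈ loopSubmodule π 𝒜 := by
  classical
  intro g'
  rw [Finsupp.single_apply]
  split_ifs with h
  · exact h ▸ hx
  · exact zero_mem _

theorem decompose_charEval [DecidableEq Gb] [DirectSum.Decomposition 𝒜]
    (χ : Multiplicative G →* Fˣ) {f : G →₀ A} (hf : f ∈ loopSubmodule π 𝒜) (gb : Gb) :
    (DirectSum.decompose 𝒜 (charEval χ f) gb : A) = charEval χ (f.filter fun g => π g = gb) := by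
  simp only [charEval_apply, Finsupp.sum_filter_index, Finsupp.support_filter, Finset.sum_filter]
  simp only [Finsupp.sum, DirectSum.decompose_sum, DirectSum.decompose_smul, DirectSum.sum_apply,
    DirectSum.smul_apply, AddSubmonoidClass.coe_finsetSum, SetLike.val_smul]
  refine Finset.sum_congr rfl fun g _ => ?_
  split_ifs with h
  · rw [← h, DirectSum.decompose_of_mem_same 𝒜 (hf g)]
  · rw [DirectSum.decompose_of_mem_ne 𝒜 (hf g) h, smul_zero]

theorem decompose_charEval_eq_sum [DecidableEq Gb] [DirectSum.Decomposition 𝒜] [Fintype ι]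
    (χ : Multiplicative G →* Fˣ) (e : ι ≃ π.ker) {f : G →₀ A} (hf : f ∈ loopSubmodule π 𝒜)
    (g : G) :
    (DirectSum.decompose 𝒜 (charEval χ f) (π g) : A) =
      ∑ j, (χ (.ofAdd (g + e j)) : F) • f (g + e j) := by
  have hfiber : ∀ g' : G, π g' = π g → ∃ j, g + e j = g' := fun g' hg' =>
    ⟨e.symm ⟨g' - g, by simp [AddMonoidHom.mem_ker, hg']⟩, by simp⟩
  have hπ : ∀ j, π (g + e j) = π g := fun j => by
    rw [map_add, AddMonoidHom.mem_ker.mp (e j).2, add_zero]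
  rw [decompose_charEval χ hf, charEval_apply, Finsupp.sum_of_support_subset _
    (s := Finset.univ.map (e.toEmbedding.trans ((Function.Embedding.subtype _).trans
      (addLeftEmbedding g))))]
  · simp only [Finset.sum_map]
    exact Finset.sum_congr rfl fun j _ => by simp [hπ j]
  · intro g' hg'
    rw [Finsupp.support_filter, Finset.mem_filter] at hg'
    simpa using hfiber g' hg'.2
  · simp

variable (π 𝒜) in
noncomputable def loopCharMap (χ : ι → Multiplicative G →* Fˣ) :
    loopSubmodule π 𝒜 →ₗ[F] ι → A :=
  LinearMap.pi fun i => charEval (χ i) ∘ₗ (loopSubmodule π 𝒜).subtype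

theorem loopCharMap_apply (χ : ι → Multiplicative G →* Fˣ) (f : loopSubmodule π 𝒜) (i : ι) :
    loopCharMap π 𝒜 χ f i = charEval (χ i) f.1 :=
  rfl

theorem loopCharMap_loopMul {mul : A → A → A} (hbil : IsBilinearMul F mul)
    (hgmul : ∀ g h : Gb, ∀ x ∈ 𝒜 g, ∀ y ∈ 𝒜 h, mul x y ∈ 𝒜 (g + h))
    (χ : ι → Multiplicative G →* Fˣ) (f f' : loopSubmodule π 𝒜) :
    loopCharMap π 𝒜 χ (loopMul mul π 𝒜 hgmul f f') =
      fun i => mul (loopCharMap π 𝒜 χ f i) (loopCharMap π 𝒜 χ f' i) :=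
  funext fun i => charEval_convMul hbil (χ i) f.1 f'.1

variable [Fintype ι] [DecidableEq ι] [DecidableEq Gb] [DirectSum.Decomposition 𝒜]
  {χ : ι → Multiplicative G →* Fˣ}

theorem loopCharMap_injective (e : ι ≃ π.ker) (hM : ∀ g, IsUnit (cosetMatrix χ e g)) :
    Function.Injective (loopCharMap π 𝒜 χ) := by
  rw [← LinearMap.ker_eq_bot, LinearMap.ker_eq_bot']
  intro f hf
  ext g : 2
  have hcoset : (fun j => f.1 (g + e j)) = 0 := by
    refine Matrix.eq_zero_of_sum_smul_eq_zero (hM g) fun i => ?_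
    simp only [cosetMatrix_apply]
    rw [← decompose_charEval_eq_sum (χ i) e f.2, ← loopCharMap_apply, hf]
    simp
  simpa using congr_fun hcoset (e.symm 0)

theorem loopCharMap_surjective (hsurj : Function.Surjective π) (e : ι ≃ π.ker)
    (hM : ∀ g, IsUnit (cosetMatrix χ e g)) :
    Function.Surjective (loopCharMap π 𝒜 χ) := by
  have hhom : ∀ gb (w : ι → A), (∀ i, w i ∈ 𝒜 gb) →
      w ∈ LinearMap.range (loopCharMap π 𝒜 χ) := by
    intro gb w hw
    obtain ⟨g, rfl⟩ := hsurj gb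
    obtain ⟨v, hv, hMv⟩ := Matrix.exists_sum_smul_eq (hM g) _ hw
    refine ⟨⟨∑ j, Finsupp.single (g + e j) (v j), sum_mem fun j _ =>
      single_mem_loopSubmodule (by simpa [AddMonoidHom.mem_ker.mp (e j).2] using hv j)⟩,
      funext fun i => ?_⟩
    simp [loopCharMap_apply, charEval_single, ← hMv i, cosetMatrix_apply]
  have hsingle : ∀ i, ⊤ ≤ (LinearMap.range (loopCharMap π 𝒜 χ)).comap
      (LinearMap.single F (fun _ => A) i) := by
    intro i
    rw [← (DirectSum.Decomposition.isInternal 𝒜).submodule_iSup_eq_top, iSup_le_iff]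
    intro gb a ha
    exact hhom gb _ fun i' => by rcases eq_or_ne i' i with rfl | h <;> simp [*]
  rw [← LinearMap.range_eq_top, eq_top_iff]
  intro w _
  rw [← Finset.univ_sum_single w]
  exact sum_mem fun i _ => hsingle i trivial

end LoopAlgebra

theorem stmt_13_general {F A : Type*} [Field F] [AddCommGroup A] [Module F A]
    {G Gb : Type*} [AddCommGroup G] [AddCommGroup Gb]
    (mul : A → A → A) (hbil : IsBilinearMul F mul)
    (π : G →+ Gb) (hsurj : Function.Surjective π) (hfin : Finite ↥π.ker)
    (𝒜 : Gb → Submodule F A)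
    (hint : ∀ [DecidableEq Gb], DirectSum.IsInternal 𝒜)
    (hgmul : ∀ g h : Gb, ∀ x ∈ 𝒜 g, ∀ y ∈ 𝒜 h, mul x y ∈ 𝒜 (g + h))
    (n : ℕ) (hn : Nat.card ↥π.ker = n)
    (χ : Fin n → (Multiplicative G →* Fˣ))
    (hχ : ∀ i j : Fin n, i ≠ j → ∃ h : ↥π.ker,
      χ i (Multiplicative.ofAdd (h : G)) ≠ χ j (Multiplicative.ofAdd (h : G))) :
    -- `Φ` is the map `x_{π(g)} ⊗ g ↦ (χ₁(g)x_{π(g)}, …, χₙ(g)x_{π(g)})`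
    ∀ Φ : ↥(loopSubmodule π 𝒜) → (Fin n → A),
      (Φ = fun f i => f.val.sum
        fun g x => (((χ i (Multiplicative.ofAdd g) : Fˣ) : F) • x)) →
      (∀ (c : F) (f f' : ↥(loopSubmodule π 𝒜)), Φ (c • f + f') = c • Φ f + Φ f') ∧
      (∀ f f' : ↥(loopSubmodule π 𝒜),
        Φ (loopMul mul π 𝒜 hgmul f f') = fun i => mul (Φ f i) (Φ f' i)) ∧
      Function.Bijective Φ := by
  intro Φ hΦ
  classical
  let := hint.chooseDecomposition
  obtain rfl : Φ = loopCharMap π 𝒜 χ := hΦ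
  let e : Fin n ≃ π.ker := (Finite.equivFinOfCardEq hn).symm
  have hM := isUnit_cosetMatrix e hχ
  exact ⟨fun c f f' => by simp, loopCharMap_loopMul hbil hgmul χ,
    loopCharMap_injective e hM, loopCharMap_surjective hsurj e hM⟩

/-- over an algebraically closed field, if `ker π` has order `n` not divisible by
`char F` and `χ₁, …, χₙ : G → F^×` extend the `n` distinct characters of `ker π`, then
`x_{π(g)} ⊗ g ↦ (χ₁(g)x, …, χₙ(g)x)` is an algebra isomorphism `L_π(A) → A × ⋯ × A`. -/
theorem stmt_13 {F A : Type*} [Field F] [IsAlgClosed F] [AddCommGroup A] [Module F A]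
    {G Gb : Type*} [AddCommGroup G] [AddCommGroup Gb]
    (mul : A → A → A) (hbil : IsBilinearMul F mul)
    (π : G →+ Gb) (hsurj : Function.Surjective π) (hfin : Finite ↥π.ker)
    (𝒜 : Gb → Submodule F A)
    (hint : ∀ [DecidableEq Gb], DirectSum.IsInternal 𝒜)
    (hgmul : ∀ g h : Gb, ∀ x ∈ 𝒜 g, ∀ y ∈ 𝒜 h, mul x y ∈ 𝒜 (g + h))
    (hsimple : IsSimpleAlgOn mul (⊤ : Submodule F A))
    (hcentral : ∀ c ∈ centroidSet mul, ∃ r : F, c = r • (LinearMap.id : Module.End F A))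
    (n : ℕ) (hn : Nat.card ↥π.ker = n) (hchar : ¬ (ringChar F ∣ n))
    (χ : Fin n → (Multiplicative G →* Fˣ))
    (hχ : ∀ i j : Fin n, i ≠ j → ∃ h : ↥π.ker,
      χ i (Multiplicative.ofAdd (h : G)) ≠ χ j (Multiplicative.ofAdd (h : G))) :
    -- `Φ` is the map `x_{π(g)} ⊗ g ↦ (χ₁(g)x_{π(g)}, …, χₙ(g)x_{π(g)})`
    ∀ Φ : ↥(loopSubmodule π 𝒜) → (Fin n → A),
      (Φ = fun f i => f.val.sum
        fun g x => (((χ i (Multiplicative.ofAdd g) : Fˣ) : F) • x)) →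
      (∀ (c : F) (f f' : ↥(loopSubmodule π 𝒜)), Φ (c • f + f') = c • Φ f + Φ f') ∧
      (∀ f f' : ↥(loopSubmodule π 𝒜),
        Φ (loopMul mul π 𝒜 hgmul f f') = fun i => mul (Φ f i) (Φ f' i)) ∧
      Function.Bijective Φ :=
  stmt_13_general mul hbil π hsurj hfin 𝒜 hint hgmul n hn χ hχ
end

section
/- Let an algebra B be the direct sum of graded ideals B¹,…,Bⁿ with respect to a fine grading Γ (a grading admitting no proper refinement). Then each induced grading Γⁱ = Γ|_{Bⁱ} is fine, and Γ is equivalent to the product grading Γ¹ × ⋯ × Γⁿ on B¹ × ⋯ × Bⁿ. Conversely, if each Γⁱ is a fine grading on Bⁱ, then the product grading Γ¹ × ⋯ × Γⁿ is fine on B¹ × ⋯ × Bⁿ. -/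
/-! Since the blocks `J i` are ideals with `J i · J j = 0` for `i ≠ j`, their gradings glue to a
grading of `B`, and a grading of `B` each of whose components lies in a single block restricts to
gradings of the blocks. Cutting the components of a fine grading `Γ` by the blocks refines `Γ`, so
every component of `Γ` already lies in one block and `Γ` is the product grading. Fineness then
passes both ways: a refinement of one block's grading, glued with the other blocks, refines `Γ`;
a refinement of `Γ` restricts to refinements of the blocks. -/

section InducedGrading

variable {F B : Type*} [Field F] [AddCommGroup B] [Module F B] {mul : B → B → B}

def inducedGrading (Γ : Set (Submodule F B)) (I : Submodule F B) : Set (Submodule F B) :=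
  (fun U => U ⊓ I) '' Γ \ {⊥}

theorem IsIdealIn.subMulLE_self {I : Submodule F B} (hI : IsIdealIn mul ⊤ I) :
    SubMulLE mul I I I :=
  fun _ hu v _ => (hI.2 _ hu v trivial).2

theorem IsGradingOn.inducedGrading {S I : Submodule F B} {Γ : Set (Submodule F B)}
    (hΓ : IsGradingOn mul S Γ) (hI : SubMulLE mul I I I) (hgr : ⨆ U ∈ Γ, U ⊓ I = I) :
    IsGradingOn mul I (inducedGrading Γ I) where
  ne_bot _ hT := hT.2
  le := by
    rintro _ ⟨⟨U, -, rfl⟩, -⟩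
    exact inf_le_right
  indep := by
    rintro _ ⟨⟨U, hU, rfl⟩, -⟩
    refine (hΓ.indep hU).mono inf_le_left (sSup_le ?_)
    rintro _ ⟨⟨⟨V, hV, rfl⟩, -⟩, hVU⟩
    exact le_sSup_of_le ⟨hV, fun h => hVU (congrArg (· ⊓ I) h)⟩ inf_le_left
  total := by
    refine le_antisymm (sSup_le ?_) (hgr.symm.le.trans (iSup₂_le fun U hU => ?_))
    · rintro _ ⟨⟨U, -, rfl⟩, -⟩
      exact inf_le_right
    · by_cases hUI : U ⊓ I = ⊥
      · exact hUI.le.trans bot_le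
      · exact le_sSup ⟨⟨U, hU, rfl⟩, hUI⟩
  mul_closed := by
    rintro _ ⟨⟨U, hU, rfl⟩, hUI⟩ _ ⟨⟨V, hV, rfl⟩, -⟩
    obtain ⟨W, hW, hUVW⟩ := hΓ.mul_closed U hU V hV
    have hprod : SubMulLE mul (U ⊓ I) (V ⊓ I) (W ⊓ I) :=
      fun u hu v hv => ⟨hUVW u hu.1 v hv.1, hI u hu.2 v hv.2⟩
    by_cases hWI : W ⊓ I = ⊥
    · refine ⟨U ⊓ I, ⟨⟨U, hU, rfl⟩, hUI⟩, fun u hu v hv => ?_⟩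
      have h0 := hprod u hu v hv
      rw [hWI, Submodule.mem_bot] at h0
      exact h0 ▸ zero_mem _
    · exact ⟨W ⊓ I, ⟨⟨W, hW, rfl⟩, hWI⟩, hprod⟩

end InducedGrading

section Blocks

variable {F B : Type*} [Field F] [AddCommGroup B] [Module F B] {mul : B → B → B}
  {ι : Type*} {J : ι → Submodule F B} {Γ : Set (Submodule F B)}

theorem iSupIndep.eq_of_le_of_le (hindep : iSupIndep J) {S : Submodule F B} (hS : S ≠ ⊥)
    {i k : ι} (hi : S ≤ J i) (hk : S ≤ J k) : i = k := by
  by_contra hik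
  exact hS (((hindep.pairwiseDisjoint hik).mono_left hi).eq_bot_of_le hk)

theorem mul_eq_zero_of_mem_of_ne (hJ : ∀ i, IsIdealIn mul ⊤ (J i)) (hindep : iSupIndep J)
    {i j : ι} (hij : i ≠ j) {x y : B} (hx : x ∈ J i) (hy : y ∈ J j) : mul x y = 0 :=
  Submodule.disjoint_def.1 (hindep.pairwiseDisjoint hij) _
    ((hJ i).2 x hx y trivial).2 ((hJ j).2 y hy x trivial).1

theorem isGradingOn_iSup_iUnion (hJ : ∀ i, IsIdealIn mul ⊤ (J i)) (hindep : iSupIndep J)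
    {Δ : ι → Set (Submodule F B)} (hΔ : ∀ i, IsGradingOn mul (J i) (Δ i)) :
    IsGradingOn mul (⨆ i, J i) (⋃ i, Δ i) where
  ne_bot U hU := by
    obtain ⟨i, hU⟩ := Set.mem_iUnion.1 hU
    exact (hΔ i).ne_bot U hU
  le U hU := by
    obtain ⟨i, hU⟩ := Set.mem_iUnion.1 hU
    exact le_iSup_of_le i ((hΔ i).le U hU)
  indep U hU := by
    obtain ⟨i, hU⟩ := Set.mem_iUnion.1 hU
    have hrest : sSup ((⋃ j, Δ j) \ {U}) ≤ sSup (Δ i \ {U}) ⊔ ⨆ j, ⨆ _ : j ≠ i, J j := by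
      refine sSup_le fun V ⟨hV, hVU⟩ => ?_
      obtain ⟨j, hV⟩ := Set.mem_iUnion.1 hV
      by_cases hji : j = i
      · subst hji
        exact le_sup_of_le_left (le_sSup ⟨hV, hVU⟩)
      · exact le_sup_of_le_right (le_iSup₂_of_le j hji ((hΔ j).le V hV))
    have hblock : U ⊔ sSup (Δ i \ {U}) ≤ J i :=
      sup_le ((hΔ i).le U hU) (sSup_le fun V hV => (hΔ i).le V hV.1)
    exact (((hΔ i).indep hU).disjoint_sup_right_of_disjoint_sup_left
      ((hindep i).mono_left hblock)).mono_right hrest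
  total := by
    rw [sSup_iUnion]
    exact iSup_congr fun i => (hΔ i).total
  mul_closed U hU V hV := by
    obtain ⟨i, hUi⟩ := Set.mem_iUnion.1 hU
    obtain ⟨j, hVj⟩ := Set.mem_iUnion.1 hV
    by_cases hij : i = j
    · subst hij
      obtain ⟨W, hW, hUVW⟩ := (hΔ i).mul_closed U hUi V hVj
      exact ⟨W, Set.mem_iUnion.2 ⟨i, hW⟩, hUVW⟩
    · refine ⟨U, hU, fun u hu v hv => ?_⟩
      rw [mul_eq_zero_of_mem_of_ne hJ hindep hij ((hΔ i).le U hUi hu) ((hΔ j).le V hVj hv)]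
      exact zero_mem _

theorem iUnion_sep_le_eq (hblock : ∀ U ∈ Γ, ∃ k, U ≤ J k) : ⋃ i, {U ∈ Γ | U ≤ J i} = Γ := by
  ext U
  simp only [Set.mem_iUnion, Set.mem_ofPred_eq]
  exact ⟨fun ⟨_, hU, _⟩ => hU, fun hU => (hblock U hU).imp fun _ hk => ⟨hU, hk⟩⟩

theorem sep_iUnion_le_eq (hindep : iSupIndep J) {Δ : ι → Set (Submodule F B)}
    (hΔ : ∀ i, IsGradingOn mul (J i) (Δ i)) (i : ι) : {U ∈ ⋃ j, Δ j | U ≤ J i} = Δ i := by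
  ext U
  refine ⟨fun ⟨hU, hUi⟩ => ?_, fun hU => ⟨Set.mem_iUnion.2 ⟨i, hU⟩, (hΔ i).le U hU⟩⟩
  obtain ⟨j, hU⟩ := Set.mem_iUnion.1 hU
  obtain rfl := hindep.eq_of_le_of_le ((hΔ j).ne_bot U hU) ((hΔ j).le U hU) hUi
  exact hU

theorem inducedGrading_eq_sep_le (hindep : iSupIndep J) (hne : ∀ U ∈ Γ, U ≠ ⊥)
    (hblock : ∀ U ∈ Γ, ∃ k, U ≤ J k) (i : ι) : inducedGrading Γ (J i) = {U ∈ Γ | U ≤ J i} := by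
  ext T
  constructor
  · rintro ⟨⟨U, hU, rfl⟩, hUi⟩
    obtain ⟨k, hUk⟩ := hblock U hU
    obtain rfl := hindep.eq_of_le_of_le hUi inf_le_right (inf_le_left.trans hUk)
    dsimp only
    rw [inf_eq_left.2 hUk]
    exact ⟨hU, hUk⟩
  · rintro ⟨hT, hTi⟩
    exact ⟨⟨T, hT, inf_eq_left.2 hTi⟩, hne T hT⟩

theorem iSup_inf_eq_of_forall_le (hindep : iSupIndep J) (htop : sSup Γ = ⊤)
    (hblock : ∀ U ∈ Γ, ∃ k, U ≤ J k) (i : ι) : ⨆ U ∈ Γ, U ⊓ J i = J i := by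
  set Ji := ⨆ U ∈ Γ, U ⊓ J i
  have hJi : Ji ≤ J i := iSup₂_le fun _ _ => inf_le_right
  have hcover : ⊤ ≤ Ji ⊔ ⨆ j, ⨆ _ : j ≠ i, J j := by
    refine htop ▸ sSup_le fun U hU => ?_
    obtain ⟨k, hUk⟩ := hblock U hU
    by_cases hki : k = i
    · subst hki
      exact le_sup_of_le_left (le_iSup₂_of_le U hU (le_inf le_rfl hUk))
    · exact le_sup_of_le_right (le_iSup₂_of_le k hki hUk)
  refine le_antisymm hJi ?_
  calc J i ≤ (Ji ⊔ ⨆ j, ⨆ _ : j ≠ i, J j) ⊓ J i := le_inf (le_top.trans hcover) le_rfl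
    _ = Ji := by rw [sup_inf_assoc_of_le _ hJi, inf_comm, (hindep i).eq_bot, sup_bot_eq]

theorem IsGradingOn.sep_le (hJ : ∀ i, IsIdealIn mul ⊤ (J i)) (hindep : iSupIndep J)
    (hΓ : IsGradingOn mul ⊤ Γ) (hblock : ∀ U ∈ Γ, ∃ k, U ≤ J k) (i : ι) :
    IsGradingOn mul (J i) {U ∈ Γ | U ≤ J i} := by
  rw [← inducedGrading_eq_sep_le hindep hΓ.ne_bot hblock i]
  exact hΓ.inducedGrading (hJ i).subMulLE_self (iSup_inf_eq_of_forall_le hindep hΓ.total hblock i)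

theorem IsFineGradingOn.iUnion_inducedGrading_eq (hJ : ∀ i, IsIdealIn mul ⊤ (J i))
    (hindep : iSupIndep J) (hsup : ⨆ i, J i = ⊤) (hΓ : IsFineGradingOn mul ⊤ Γ)
    (hgr : ∀ i, ⨆ U ∈ Γ, U ⊓ J i = J i) : ⋃ i, inducedGrading Γ (J i) = Γ := by
  have hind : ∀ i, IsGradingOn mul (J i) (inducedGrading Γ (J i)) :=
    fun i => hΓ.1.inducedGrading (hJ i).subMulLE_self (hgr i)
  refine hΓ.2 _ (hsup ▸ isGradingOn_iSup_iUnion hJ hindep hind) fun T hT => ?_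
  obtain ⟨i, ⟨U, hU, rfl⟩, -⟩ := Set.mem_iUnion.1 hT
  exact ⟨U, hU, inf_le_left⟩

theorem IsFineGradingOn.sep_le (hJ : ∀ i, IsIdealIn mul ⊤ (J i)) (hindep : iSupIndep J)
    (hsup : ⨆ i, J i = ⊤) (hΓ : IsFineGradingOn mul ⊤ Γ) (hblock : ∀ U ∈ Γ, ∃ k, U ≤ J k)
    (i : ι) : IsFineGradingOn mul (J i) {U ∈ Γ | U ≤ J i} := by
  classical
  refine ⟨hΓ.1.sep_le hJ hindep hblock i, fun Δ hΔ hΔref => ?_⟩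
  set Δ' := Function.update (fun j => {U ∈ Γ | U ≤ J j}) i Δ with hΔ'
  have hΔ'gr : ∀ j, IsGradingOn mul (J j) (Δ' j) := by
    intro j
    rcases eq_or_ne j i with rfl | hji
    · simpa [Δ'] using hΔ
    · simpa [Δ', hji] using hΓ.1.sep_le hJ hindep hblock j
  have hglue : ⋃ j, Δ' j = Γ := by
    refine hΓ.2 _ (hsup ▸ isGradingOn_iSup_iUnion hJ hindep hΔ'gr) fun U hU => ?_
    obtain ⟨j, hU⟩ := Set.mem_iUnion.1 hU
    rcases eq_or_ne j i with rfl | hji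
    · obtain ⟨W, ⟨hW, -⟩, hUW⟩ := hΔref U (by simpa [Δ'] using hU)
      exact ⟨W, hW, hUW⟩
    · exact ⟨U, (by simpa [Δ', hji] using hU : U ∈ {U ∈ Γ | U ≤ J j}).1, le_rfl⟩
  have hi := sep_iUnion_le_eq hindep hΔ'gr i
  rw [hglue, hΔ', Function.update_self] at hi
  exact hi.symm

theorem isFineGradingOn_top_of_sep_le (hJ : ∀ i, IsIdealIn mul ⊤ (J i))
    (hindep : iSupIndep J) (hΓ : IsGradingOn mul ⊤ Γ) (hblock : ∀ U ∈ Γ, ∃ k, U ≤ J k)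
    (hfine : ∀ i, IsFineGradingOn mul (J i) {U ∈ Γ | U ≤ J i}) : IsFineGradingOn mul ⊤ Γ := by
  refine ⟨hΓ, fun Γ'' hΓ'' href => ?_⟩
  have hblock'' : ∀ U ∈ Γ'', ∃ k, U ≤ J k := fun U hU =>
    let ⟨W, hW, hUW⟩ := href U hU
    (hblock W hW).imp fun _ hWk => hUW.trans hWk
  have hpart : ∀ i, {U ∈ Γ'' | U ≤ J i} = {U ∈ Γ | U ≤ J i} := by
    refine fun i => (hfine i).2 _ (hΓ''.sep_le hJ hindep hblock'' i) fun U ⟨hU, hUi⟩ => ?_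
    obtain ⟨W, hW, hUW⟩ := href U hU
    obtain ⟨k, hWk⟩ := hblock W hW
    obtain rfl := hindep.eq_of_le_of_le (hΓ''.ne_bot U hU) hUi (hUW.trans hWk)
    exact ⟨W, ⟨hW, hWk⟩, hUW⟩
  rw [← iUnion_sep_le_eq hblock'', ← iUnion_sep_le_eq hblock]
  exact Set.iUnion_congr hpart

end Blocks

/-- if a fine grading `Γ` on `B = B¹ ⊕ ⋯ ⊕ Bⁿ` (graded ideals) is given, then the
induced gradings on the `Bⁱ` are fine and `Γ` is the union of the induced gradings (i.e. `Γ` is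
the product grading); conversely the union of fine gradings of the `Bⁱ` is a fine grading. -/
theorem stmt_15 {F B : Type*} [Field F] [AddCommGroup B] [Module F B]
    (mul : B → B → B) {n : ℕ} (J : Fin n → Submodule F B)
    (hJid : ∀ i, IsIdealIn mul ⊤ (J i)) (hindep : iSupIndep J)
    (hsup : (⨆ i, J i) = ⊤) :
    (∀ Γ : Set (Submodule F B), IsFineGradingOn mul ⊤ Γ →
      (∀ i, (⨆ U ∈ Γ, U ⊓ J i) = J i) →
      (∀ i, IsFineGradingOn mul (J i) ((fun U => U ⊓ J i) '' Γ \ {⊥})) ∧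
      Γ = ⋃ i, ((fun U => U ⊓ J i) '' Γ \ {⊥})) ∧
    (∀ Γs : Fin n → Set (Submodule F B),
      (∀ i, IsFineGradingOn mul (J i) (Γs i)) →
      IsFineGradingOn mul ⊤ (⋃ i, Γs i)) := by
  refine ⟨fun Γ hΓ hgr => ?_, fun Γs hΓs => ?_⟩
  · have hprod := hΓ.iUnion_inducedGrading_eq hJid hindep hsup hgr
    have hblock : ∀ U ∈ Γ, ∃ k, U ≤ J k := fun U hU => by
      obtain ⟨k, ⟨V, -, rfl⟩, -⟩ := Set.mem_iUnion.1 (hprod.symm ▸ hU)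
      exact ⟨k, inf_le_right⟩
    refine ⟨fun i => ?_, hprod.symm⟩
    rw [show (fun U => U ⊓ J i) '' Γ \ {⊥} = inducedGrading Γ (J i) from rfl,
      inducedGrading_eq_sep_le hindep hΓ.1.ne_bot hblock i]
    exact hΓ.sep_le hJid hindep hsup hblock i
  · have hgr := hsup ▸ isGradingOn_iSup_iUnion hJid hindep fun i => (hΓs i).1
    refine isFineGradingOn_top_of_sep_le hJid hindep hgr (fun U hU => ?_) fun i => ?_
    · obtain ⟨k, hU⟩ := Set.mem_iUnion.1 hU
      exact ⟨k, (hΓs k).1.le U hU⟩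
    · rw [sep_iUnion_le_eq hindep (fun j => (hΓs j).1) i]
      exact hΓs i
end

section
/- Let A = Fa ⊕ Fb be the two-dimensional algebra with multiplication a² = a, ab = b, ba = 0, b² = a + b. Then A is simple, and for every commutative unital F-algebra R, the only R-algebra automorphism of A ⊗_F R is the identity; hence the automorphism group scheme of A is trivial and the only group-grading on A is the trivial one. -/
/-- The algebra `A = Fa ⊕ Fb` with `a² = a`, `ab = b`, `ba = 0`, `b² = a + b`, realized on
`F × F` (resp. `R × R` after scalar extension) with `a = (1,0)`, `b = (0,1)`. -/
def exMul {R : Type*} [CommRing R] : R × R → R × R → R × R :=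
  fun x y => (x.1 * y.1 + x.2 * y.2, x.1 * y.2 + x.2 * y.2)

/-! `a = (1,0)` is the unique left unit of `A ⊗ R`, so an automorphism fixes it, and then
`ba = 0`, `b² = a + b` pin down the image of `b`. A nonzero ideal contains `a` or `b`, hence
`a = b² - b`, hence everything, `a` being a left unit.

Two distinct components of a group grading of the two-dimensional `A` are complementary lines
`U`, `V` of degrees `g ≠ h`. If `g = 0`, the grading is a `ℤ/2`-grading with even part `U`; the odd
part of `a` left-annihilates `A`, so `a ∈ U`, and then `ba = 0`, `b² = a + b` leave no room for
`V`. If `g, h ≠ 0`, then `VU = 0`, so the `U`-part of `a` is a left unit on `U`, although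
`UU` lies in degree `2g ≠ g`. -/

section ExMul

variable {R : Type*} [CommRing R]

theorem exMul_one_zero_left (x : R × R) : exMul (1, 0) x = x := by
  simp [exMul]

theorem exMul_add_left (x y z : R × R) : exMul (x + y) z = exMul x z + exMul y z := by
  ext <;> simp only [exMul, Prod.fst_add, Prod.snd_add] <;> ring

theorem exMul_add_right (x y z : R × R) : exMul x (y + z) = exMul x y + exMul x z := by
  ext <;> simp only [exMul, Prod.fst_add, Prod.snd_add] <;> ring

theorem eq_zero_of_exMul_zero_one_eq_zero {x : R × R} (h : exMul x (0, 1) = 0) : x = 0 := by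
  have h1 : x.2 = 0 := by simpa [exMul] using congrArg Prod.fst h
  have h2 : x.1 + x.2 = 0 := by simpa [exMul] using congrArg Prod.snd h
  exact Prod.ext (by simpa [h1] using h2) h1

theorem eq_one_zero_of_forall_exMul_eq {e : R × R} (he : ∀ x, exMul e x = x) : e = (1, 0) := by
  have h1 : e.1 = 1 := by simpa [exMul] using congrArg Prod.fst (he (1, 0))
  have h2 : e.2 = 0 := by simpa [exMul] using congrArg Prod.fst (he (0, 1))
  exact Prod.ext h1 h2

theorem LinearEquiv.eq_refl_of_map_exMul (φ : (R × R) ≃ₗ[R] (R × R))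
    (hφ : ∀ x y, φ (exMul x y) = exMul (φ x) (φ y)) : φ = LinearEquiv.refl R (R × R) := by
  have hφa : φ (1, 0) = (1, 0) := eq_one_zero_of_forall_exMul_eq fun w => by
    rw [← φ.apply_symm_apply w, ← hφ, exMul_one_zero_left]
  rcases hφb : φ (0, 1) with ⟨r, s⟩
  have hba := hφ (0, 1) (1, 0)
  have hbb := hφ (0, 1) (0, 1)
  have hab : exMul ((0 : R), (1 : R)) (0, 1) = (1, 0) + (0, 1) := by ext <;> simp [exMul]
  rw [hab, map_add, hφa, hφb] at hbb
  rw [hφa, hφb, show exMul ((0 : R), (1 : R)) (1, 0) = 0 by ext <;> simp [exMul], map_zero] at hba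
  have hr : r = 0 := by simpa [exMul] using (congrArg Prod.fst hba).symm
  have hs1 : 1 + r = r * r + s * s := by simpa [exMul] using congrArg Prod.fst hbb
  have hs2 : s = r * s + s * s := by simpa [exMul] using congrArg Prod.snd hbb
  have hs : s = 1 := by subst hr; linear_combination hs2 - hs1
  refine LinearEquiv.ext fun w => ?_
  have hw : w = w.1 • ((1, 0) : R × R) + w.2 • (0, 1) := by ext <;> simp
  rw [LinearEquiv.refl_apply, hw, map_add, map_smul, map_smul, hφa, hφb, hr, hs]

end ExMul

section ExMulField

variable {F : Type*} [Field F]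

theorem IsIdealIn.exMul_eq_bot_or_eq_top {I : Submodule F (F × F)} (hI : IsIdealIn exMul ⊤ I) :
    I = ⊥ ∨ I = ⊤ := by
  refine or_iff_not_imp_left.2 fun hI0 => ?_
  have hmul : ∀ x ∈ I, ∀ y, exMul x y ∈ I := fun x hx y => (hI.2 x hx y trivial).2
  obtain ⟨x, hx, hx0⟩ := Submodule.exists_mem_ne_zero_of_ne_bot hI0
  have hxa : exMul x (1, 0) = x.1 • ((1, 0) : F × F) := by ext <;> simp [exMul]
  have hxb : x - exMul x (1, 0) = x.2 • ((0, 1) : F × F) := by ext <;> simp [exMul]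
  have ha : ((1, 0) : F × F) ∈ I := by
    by_cases h1 : x.1 = 0
    · have h2 : x.2 ≠ 0 := fun h2 => hx0 (Prod.ext h1 h2)
      have hb : ((0, 1) : F × F) ∈ I :=
        (I.smul_mem_iff h2).1 (hxb ▸ I.sub_mem hx (hmul x hx _))
      have hbb : exMul ((0, 1) : F × F) (0, 1) - (0, 1) = (1, 0) := by ext <;> simp [exMul]
      exact hbb ▸ I.sub_mem (hmul _ hb _) hb
    · exact (I.smul_mem_iff h1).1 (hxa ▸ hmul x hx _)
  exact eq_top_iff.2 fun w _ => exMul_one_zero_left w ▸ hmul _ ha w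

theorem exists_exMul_ne_zero : ∃ x y : F × F, exMul x y ≠ 0 :=
  ⟨(1, 0), (1, 0), by simp [exMul]⟩

variable {U V : Submodule F (F × F)}

theorem exists_add_eq_one_zero (hsup : U ⊔ V = ⊤) : ∃ e ∈ U, ∃ e' ∈ V, e + e' = (1, 0) :=
  Submodule.mem_sup.1 (hsup ▸ Submodule.mem_top)

/-- A `ℤ/2`-grading `A = U ⊕ V` of `A` is trivial. -/
theorem eq_bot_of_exMul_parity (hdisj : Disjoint U V) (hsup : U ⊔ V = ⊤)
    (hUU : SubMulLE exMul U U U) (hUV : SubMulLE exMul U V V) (hVU : SubMulLE exMul V U V)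
    (hVV : SubMulLE exMul V V U) : V = ⊥ := by
  have hzero := Submodule.disjoint_def.1 hdisj
  obtain ⟨e, he, e', he', hee'⟩ := exists_add_eq_one_zero hsup
  have hunit : ∀ x, exMul e x + exMul e' x = x := fun x => by
    rw [← exMul_add_left, hee', exMul_one_zero_left]
  have hann : ∀ x, exMul e' x = 0 := fun x => by
    obtain ⟨u, hu, v, hv, rfl⟩ := Submodule.mem_sup.1 (hsup ▸ Submodule.mem_top : x ∈ U ⊔ V)
    have hu' : exMul e' u = u - exMul e u := eq_sub_of_add_eq' (hunit u)
    have hv' : exMul e' v = v - exMul e v := eq_sub_of_add_eq' (hunit v)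
    rw [exMul_add_right,
      hzero _ (hu' ▸ U.sub_mem hu (hUU e he u hu)) (hVU e' he' u hu),
      hzero _ (hVV e' he' v hv) (hv' ▸ V.sub_mem hv (hUV e he v hv)), add_zero]
  have ha : ((1, 0) : F × F) ∈ U := by
    rw [← hee', eq_zero_of_exMul_zero_one_eq_zero (hann _), add_zero]
    exact he
  refine (Submodule.eq_bot_iff V).2 fun v hv => ?_
  have hva : exMul v (1, 0) = v.1 • ((1, 0) : F × F) := by ext <;> simp [exMul]
  have hv1 : v.1 = 0 := by
    have := hzero _ (hva ▸ U.smul_mem v.1 ha) (hVU v hv _ ha)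
    simpa [exMul] using congrArg Prod.fst this
  have hvv : exMul v v - (v.2 * v.2) • ((1, 0) : F × F) = v.2 • v := by
    ext <;> simp [exMul, hv1]
  have h2v := hzero _ (hvv ▸ U.sub_mem (hVV v hv v hv) (U.smul_mem _ ha)) (V.smul_mem v.2 hv)
  rcases smul_eq_zero.1 h2v with h2 | h
  · exact Prod.ext hv1 h2
  · exact h

theorem exists_mem_forall_exMul_eq_self (hsup : U ⊔ V = ⊤)
    (hVU : ∀ v ∈ V, ∀ u ∈ U, exMul v u = 0) : ∃ e ∈ U, ∀ u ∈ U, exMul e u = u := by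
  obtain ⟨e, he, e', he', hee'⟩ := exists_add_eq_one_zero hsup
  refine ⟨e, he, fun u hu => ?_⟩
  rw [← add_zero (exMul e u), ← hVU e' he' u hu, ← exMul_add_left, hee', exMul_one_zero_left]

end ExMulField

theorem sSupIndep.eq_or_eq_of_sup_eq_top {α : Type*} [CompleteLattice α] {Γ : Set α}
    (hind : sSupIndep Γ) (hne : ∀ W ∈ Γ, W ≠ ⊥) {U V : α} (hU : U ∈ Γ) (hV : V ∈ Γ)
    (hsup : U ⊔ V = ⊤) {W : α} (hW : W ∈ Γ) : W = U ∨ W = V := by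
  by_contra! h
  have hle : U ⊔ V ≤ sSup (Γ \ {W}) :=
    sup_le (le_sSup ⟨hU, h.1.symm⟩) (le_sSup ⟨hV, h.2.symm⟩)
  exact hne W hW (disjoint_top.1 (hsup ▸ (hind hW).mono_right hle))

theorem Submodule.sup_eq_top_of_finrank_le_two {F B : Type*} [Field F] [AddCommGroup B]
    [Module F B] [FiniteDimensional F B] (hB : Module.finrank F B ≤ 2) {U V : Submodule F B}
    (hdisj : Disjoint U V) (hU : U ≠ ⊥) (hV : V ≠ ⊥) : U ⊔ V = ⊤ := by
  have hdim := Submodule.finrank_sup_add_finrank_inf_eq U V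
  rw [hdisj.eq_bot, finrank_bot, add_zero] at hdim
  have hU1 := Submodule.one_le_finrank_iff.2 hU
  have hV1 := Submodule.one_le_finrank_iff.2 hV
  exact Submodule.eq_top_of_finrank_eq (le_antisymm (Submodule.finrank_le _) (by omega))

section Grading

variable {F B : Type*} [Field F] [AddCommGroup B] [Module F B] {mul : B → B → B}
  {S : Submodule F B} {Γ : Set (Submodule F B)} {G : Type*} [AddCommGroup G]
  {δ : Submodule F B → G}

theorem IsCompatMap.subMulLE (hδ : IsCompatMap mul Γ G δ) (hΓ : IsGradingOn mul S Γ)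
    {X Y Z : Submodule F B} (hX : X ∈ Γ) (hY : Y ∈ Γ)
    (hZ : ∀ W ∈ Γ, δ X + δ Y = δ W → W = Z) : SubMulLE mul X Y Z := by
  intro x hx y hy
  obtain ⟨W, hW, hXYW⟩ := hΓ.mul_closed X hX Y hY
  by_cases h0 : mul x y = 0
  · exact h0 ▸ Z.zero_mem
  · exact hZ W hW (hδ X hX Y hY W hW ⟨x, hx, y, hy, h0⟩ hXYW) ▸ hXYW x hx y hy

theorem IsCompatMap.subMulLE_of_pair (hδ : IsCompatMap mul Γ G δ) (hΓ : IsGradingOn mul S Γ)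
    {U V X Y Z : Submodule F B} (hpair : ∀ W ∈ Γ, W = U ∨ W = V) (hX : X ∈ Γ) (hY : Y ∈ Γ)
    (hXYU : δ X + δ Y = δ U → U = Z) (hXYV : δ X + δ Y = δ V → V = Z) :
    SubMulLE mul X Y Z :=
  hδ.subMulLE hΓ hX hY fun W hW hXYW => by
    rcases hpair W hW with rfl | rfl
    exacts [hXYU hXYW, hXYV hXYW]

end Grading

section ExMulGrading

variable {F : Type*} [Field F] {Γ : Set (Submodule F (F × F))} {G : Type*} [AddCommGroup G]
  {δ : Submodule F (F × F) → G} {U V : Submodule F (F × F)}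

theorem false_of_exMul_grading_pair_of_degree_eq_zero (hΓ : IsGrading exMul Γ)
    (hδi : Set.InjOn δ Γ) (hδ : IsCompatMap exMul Γ G δ) (hU : U ∈ Γ) (hV : V ∈ Γ)
    (hUV : U ≠ V) (hsup : U ⊔ V = ⊤) (hpair : ∀ W ∈ Γ, W = U ∨ W = V) (hU0 : δ U = 0) :
    False := by
  have hV0 : δ V ≠ 0 := fun h => hUV (hδi hU hV (hU0.trans h.symm))
  have hUUU : SubMulLE exMul U U U := hδ.subMulLE_of_pair hΓ hpair hU hU (fun _ => rfl)
    fun h => absurd (by simpa [hU0] using h.symm) hV0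
  have hUVV : SubMulLE exMul U V V := hδ.subMulLE_of_pair hΓ hpair hU hV
    (fun h => absurd (by simpa [hU0] using h) hV0) fun _ => rfl
  have hVUV : SubMulLE exMul V U V := hδ.subMulLE_of_pair hΓ hpair hV hU
    (fun h => absurd (by simpa [hU0] using h) hV0) fun _ => rfl
  have hVVU : SubMulLE exMul V V U := hδ.subMulLE_of_pair hΓ hpair hV hV (fun _ => rfl)
    fun h => absurd (add_eq_right.1 h) hV0
  exact hΓ.ne_bot V hV (eq_bot_of_exMul_parity (hΓ.indep.pairwiseDisjoint hU hV hUV)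
    hsup hUUU hUVV hVUV hVVU)

theorem false_of_exMul_grading_pair (hΓ : IsGrading exMul Γ) (hδi : Set.InjOn δ Γ)
    (hδ : IsCompatMap exMul Γ G δ) (hU : U ∈ Γ) (hV : V ∈ Γ) (hUV : U ≠ V)
    (hsup : U ⊔ V = ⊤) (hpair : ∀ W ∈ Γ, W = U ∨ W = V) : False := by
  by_cases hU0 : δ U = 0
  · exact false_of_exMul_grading_pair_of_degree_eq_zero hΓ hδi hδ hU hV hUV hsup hpair hU0
  by_cases hV0 : δ V = 0
  · exact false_of_exMul_grading_pair_of_degree_eq_zero hΓ hδi hδ hV hU hUV.symm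
      (sup_comm U V ▸ hsup) (fun W hW => (hpair W hW).symm) hV0
  have hdisj := Submodule.disjoint_def.1 (hΓ.indep.pairwiseDisjoint hU hV hUV)
  -- `VU` has degree `δ V + δ U`, which is neither `δ U` nor `δ V`.
  have hVU : ∀ v ∈ V, ∀ u ∈ U, exMul v u = 0 := fun v hv u hu => hdisj _
    (hδ.subMulLE_of_pair hΓ hpair hV hU (fun _ => rfl)
      (fun h => absurd (add_eq_left.1 h) hU0) v hv u hu)
    (hδ.subMulLE_of_pair hΓ hpair hV hU (fun h => absurd (add_eq_right.1 h) hV0)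
      (fun _ => rfl) v hv u hu)
  have hUUV : SubMulLE exMul U U V :=
    hδ.subMulLE_of_pair hΓ hpair hU hU (fun h => absurd (add_eq_right.1 h) hU0) fun _ => rfl
  obtain ⟨e, he, hunit⟩ := exists_mem_forall_exMul_eq_self hsup hVU
  obtain ⟨u, hu, hu0⟩ := Submodule.exists_mem_ne_zero_of_ne_bot (hΓ.ne_bot U hU)
  exact hu0 (hdisj u hu (hunit u hu ▸ hUUV e he u hu))

theorem IsGrading.exMul_eq_singleton_top (hΓ : IsGrading exMul Γ)
    (hGG : IsGroupGrading exMul Γ) : Γ = {⊤} := by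
  obtain ⟨G, _, δ, hδi, hδ⟩ := hGG
  obtain ⟨U, hU⟩ : Γ.Nonempty := Set.nonempty_iff_ne_empty.2 fun h =>
    bot_ne_top (sSup_empty (α := Submodule F (F × F)) ▸ h ▸ hΓ.total)
  have hΓU : Γ = {U} := Set.eq_singleton_iff_unique_mem.2 ⟨hU, fun V hV => by
    by_contra hVU
    have hsup := Submodule.sup_eq_top_of_finrank_le_two (by simp)
      (hΓ.indep.pairwiseDisjoint hU hV (Ne.symm hVU)) (hΓ.ne_bot U hU) (hΓ.ne_bot V hV)
    exact false_of_exMul_grading_pair hΓ hδi hδ hU hV (Ne.symm hVU) hsup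
      fun W hW => hΓ.indep.eq_or_eq_of_sup_eq_top hΓ.ne_bot hU hV hsup hW⟩
  have htop := hΓ.total
  rw [hΓU, sSup_singleton] at htop
  rw [hΓU, htop]

end ExMulGrading

/-- the algebra `A` above is simple, every `R`-algebra automorphism of `A ⊗ R`
is the identity (so the automorphism group scheme is trivial), and the only group-grading on
`A` is the trivial one. -/
theorem stmt_17 {F : Type*} [Field F] :
    -- `A` is simple:
    ((∃ x y : F × F, exMul x y ≠ 0) ∧
      ∀ I : Submodule F (F × F), IsIdealIn exMul ⊤ I → I = ⊥ ∨ I = ⊤) ∧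
    -- every `R`-algebra automorphism of `A ⊗_F R` is the identity:
    (∀ (R : Type) (instR : CommRing R) (instA : Algebra F R)
      (φ : (R × R) ≃ₗ[R] (R × R)),
      (∀ x y : R × R, φ (exMul x y) = exMul (φ x) (φ y)) →
      φ = LinearEquiv.refl R (R × R)) ∧
    -- the only group-grading on `A` is the trivial one:
    (∀ Γ : Set (Submodule F (F × F)), IsGrading exMul Γ → IsGroupGrading exMul Γ →
      Γ = {(⊤ : Submodule F (F × F))}) :=
  ⟨⟨exists_exMul_ne_zero, fun _ hI => hI.exMul_eq_bot_or_eq_top⟩,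
    fun _ _ _ φ hφ => φ.eq_refl_of_map_exMul hφ,
    fun _ hΓ hGG => hΓ.exMul_eq_singleton_top hGG⟩
end
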